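/- arXiv:2104.06714 — 4 statements merged into one kernel-verified Lean document; each statement's English description precedes it below -/
import Mathlib

section
/- For every fixed real β ≥ 0 there exist constants c₁, c₂ > 0 (depending only on β) such that for all integers k ≥ 2 and all integers u with u ≥ √(2k), the random variable X ~ pow(β,u) satisfies: (i) if β < 1, then c₁·(√k/u)^{1−β} ≤ Pr[⌈√k⌉ ≤ X ≤ ⌊√(2k)⌋] ≤ c₂·(√k/u)^{1−β}; (ii) if β = 1, then c₁/ln(u) ≤ Pr[⌈√k⌉ ≤ X ≤ ⌊√(2k)⌋] ≤ c₂/ln(u); (iii) if β > 1, then c₁·k^{(1−β)/2} ≤ Pr[⌈√k⌉ ≤ X ≤ ⌊√(2k)⌋] ≤ c₂·k^{(1−β)/2}. -/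
/-!
The interval `[⌈√k⌉, ⌊√(2k)⌋]` is nonempty (`⌈√k⌉² ≤ 2k`) and holds between `√k / 5` and `2√k`
integers, each weighted between `(√2 √k)^(-β)` and `√k^(-β)`, so its mass is `≍ √k^(1-β)`.
Comparing the normaliser `∑_{j ≤ u} j^(-β)` with `1 + ∫₁ᵘ x^(-β) dx` shows that it is `≍ u^(1-β)`
for `β < 1`, `≍ log u` for `β = 1` (harmonic numbers), and lies in `[1, β / (β - 1)]` for `β > 1`.
-/

open Finset

/-- The probability that `X ~ pow(β,u)` lies in the integer interval
`[⌈√k⌉ .. ⌊√(2k)⌋]`, namely `C_{β,u} · ∑_{i=⌈√k⌉}^{⌊√(2k)⌋} i^(-β)`. -/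
noncomputable def powLawProbSqrtRange (β : ℝ) (u k : ℕ) : ℝ :=
  (∑ j ∈ Finset.Icc 1 u, (j : ℝ) ^ (-β))⁻¹ *
    ∑ i ∈ Finset.Icc ⌈Real.sqrt k⌉₊ ⌊Real.sqrt (2 * k)⌋₊, (i : ℝ) ^ (-β)

open Real

theorem ceil_sqrt_sq_le_two_mul (k : ℕ) : ⌈√k⌉₊ ^ 2 ≤ 2 * k := by
  obtain h | h := Nat.eq_zero_or_pos ⌈√k⌉₊
  · simp [h]
  have hlt : ((⌈√k⌉₊ : ℤ) - 1) ^ 2 < k := by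
    have : ((⌈√k⌉₊ : ℝ) - 1) ^ 2 < k := by
      have h1 : (1 : ℝ) ≤ ⌈√k⌉₊ := by exact_mod_cast h
      calc ((⌈√k⌉₊ : ℝ) - 1) ^ 2 < √k ^ 2 := by
            gcongr
            linarith [Nat.ceil_lt_add_one (sqrt_nonneg (k : ℝ))]
        _ = (k : ℝ) := sq_sqrt k.cast_nonneg
    exact_mod_cast this
  -- `n² ≤ 2((n - 1)² + 1)` is `(n - 2)² ≥ 0`
  zify
  nlinarith [sq_nonneg ((⌈√k⌉₊ : ℤ) - 2)]

theorem ceil_sqrt_le_floor_sqrt_two_mul (k : ℕ) : ⌈√k⌉₊ ≤ ⌊√(2 * k)⌋₊ := by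
  refine Nat.le_floor ((le_sqrt (by positivity) (by positivity)).2 ?_)
  exact_mod_cast ceil_sqrt_sq_le_two_mul k

theorem cast_card_Icc_ceil_sqrt_floor_sqrt_two_mul (k : ℕ) :
    (#(Icc ⌈√k⌉₊ ⌊√(2 * k)⌋₊) : ℝ) = ⌊√(2 * k)⌋₊ + 1 - ⌈√k⌉₊ := by
  rw [Nat.card_Icc, Nat.cast_sub (by have := ceil_sqrt_le_floor_sqrt_two_mul k; omega)]
  push_cast
  ring

theorem sqrt_two_mul_natCast (k : ℕ) : √(2 * k) = √2 * √k := sqrt_mul zero_le_two _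

theorem card_Icc_ceil_sqrt_floor_sqrt_two_mul_le {k : ℕ} (hk : 1 ≤ k) :
    (#(Icc ⌈√k⌉₊ ⌊√(2 * k)⌋₊) : ℝ) ≤ 2 * √k := by
  have hsk : 1 ≤ √k := one_le_sqrt.2 (by exact_mod_cast hk)
  have hB := Nat.floor_le (sqrt_nonneg (2 * k : ℝ))
  have hA := Nat.le_ceil √k
  rw [cast_card_Icc_ceil_sqrt_floor_sqrt_two_mul]
  rw [sqrt_two_mul_natCast] at hB ⊢
  have hs2 : √2 ≤ 2 := sqrt_le_iff.2 ⟨zero_le_two, by norm_num⟩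
  nlinarith

theorem sqrt_div_five_le_card_Icc_ceil_sqrt_floor_sqrt_two_mul (k : ℕ) :
    √k / 5 ≤ (#(Icc ⌈√k⌉₊ ⌊√(2 * k)⌋₊) : ℝ) := by
  have hpos : (1 : ℝ) ≤ #(Icc ⌈√k⌉₊ ⌊√(2 * k)⌋₊) := by
    exact_mod_cast Finset.card_pos.2 (nonempty_Icc.2 (ceil_sqrt_le_floor_sqrt_two_mul k))
  rw [cast_card_Icc_ceil_sqrt_floor_sqrt_two_mul] at *
  have hB := Nat.lt_floor_add_one (√(2 * k))
  have hA := Nat.ceil_lt_add_one (sqrt_nonneg (k : ℝ))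
  have hs2 : (7 : ℝ) / 5 ≤ √2 := le_sqrt_of_sq_le (by norm_num)
  rw [sqrt_two_mul_natCast] at *
  -- the count exceeds `(√2 - 1)√k - 1`, which beats `√k / 5` once `√k > 5`
  rcases le_or_gt √k 5 with h | h
  · linarith
  · nlinarith

theorem mul_rpow_neg_eq_rpow_one_sub {x : ℝ} (hx : 0 < x) (β : ℝ) : x * x ^ (-β) = x ^ (1 - β) := by
  rw [sub_eq_add_neg, rpow_add hx, rpow_one]

section

variable {β : ℝ}

theorem sum_Icc_ceil_sqrt_floor_sqrt_two_mul_rpow_neg_le (hβ : 0 ≤ β) {k : ℕ} (hk : 1 ≤ k) :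
    ∑ i ∈ Icc ⌈√k⌉₊ ⌊√(2 * k)⌋₊, (i : ℝ) ^ (-β) ≤ 2 * √k ^ (1 - β) := by
  have hsk : 0 < √k := sqrt_pos.2 (by exact_mod_cast hk)
  have hterm : ∀ i ∈ Icc ⌈√k⌉₊ ⌊√(2 * k)⌋₊, (i : ℝ) ^ (-β) ≤ √k ^ (-β) := fun i hi =>
    rpow_le_rpow_of_nonpos hsk ((Nat.le_ceil _).trans (mod_cast (mem_Icc.1 hi).1))
      (neg_nonpos.2 hβ)
  calc ∑ i ∈ Icc ⌈√k⌉₊ ⌊√(2 * k)⌋₊, (i : ℝ) ^ (-β)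
      ≤ #(Icc ⌈√k⌉₊ ⌊√(2 * k)⌋₊) * √k ^ (-β) := by
        simpa using sum_le_card_nsmul _ _ _ hterm
    _ ≤ 2 * √k * √k ^ (-β) := by
        gcongr
        exact card_Icc_ceil_sqrt_floor_sqrt_two_mul_le hk
    _ = 2 * √k ^ (1 - β) := by rw [mul_assoc, mul_rpow_neg_eq_rpow_one_sub hsk β]

theorem le_sum_Icc_ceil_sqrt_floor_sqrt_two_mul_rpow_neg (hβ : 0 ≤ β) {k : ℕ} (hk : 1 ≤ k) :
    √2 ^ (-β) / 5 * √k ^ (1 - β) ≤ ∑ i ∈ Icc ⌈√k⌉₊ ⌊√(2 * k)⌋₊, (i : ℝ) ^ (-β) := by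
  have hsk : 0 < √k := sqrt_pos.2 (by exact_mod_cast hk)
  have hterm : ∀ i ∈ Icc ⌈√k⌉₊ ⌊√(2 * k)⌋₊, √(2 * k) ^ (-β) ≤ (i : ℝ) ^ (-β) := fun i hi =>
    rpow_le_rpow_of_nonpos (hsk.trans_le ((Nat.le_ceil _).trans (mod_cast (mem_Icc.1 hi).1)))
      ((Nat.cast_le.2 (mem_Icc.1 hi).2).trans (Nat.floor_le (sqrt_nonneg _))) (neg_nonpos.2 hβ)
  calc √2 ^ (-β) / 5 * √k ^ (1 - β) = √k / 5 * √(2 * k) ^ (-β) := by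
        rw [sqrt_two_mul_natCast, mul_rpow (sqrt_nonneg _) hsk.le,
          ← mul_rpow_neg_eq_rpow_one_sub hsk β]
        ring
    _ ≤ #(Icc ⌈√k⌉₊ ⌊√(2 * k)⌋₊) * √(2 * k) ^ (-β) := by
        gcongr
        exact sqrt_div_five_le_card_Icc_ceil_sqrt_floor_sqrt_two_mul k
    _ ≤ ∑ i ∈ Icc ⌈√k⌉₊ ⌊√(2 * k)⌋₊, (i : ℝ) ^ (-β) := by
        simpa using card_nsmul_le_sum _ _ _ hterm

theorem one_le_sum_Icc_rpow_neg (β : ℝ) {u : ℕ} (hu : 1 ≤ u) :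
    1 ≤ ∑ j ∈ Icc 1 u, (j : ℝ) ^ (-β) := by
  simpa using single_le_sum (fun j _ => rpow_nonneg j.cast_nonneg (-β)) (left_mem_Icc.2 hu)

theorem rpow_one_sub_le_sum_Icc_rpow_neg (hβ : 0 ≤ β) {u : ℕ} (hu : 1 ≤ u) :
    (u : ℝ) ^ (1 - β) ≤ ∑ j ∈ Icc 1 u, (j : ℝ) ^ (-β) := by
  have hu' : (0 : ℝ) < u := by exact_mod_cast hu
  have hterm : ∀ j ∈ Icc 1 u, (u : ℝ) ^ (-β) ≤ (j : ℝ) ^ (-β) := fun j hj =>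
    rpow_le_rpow_of_nonpos (by exact_mod_cast (mem_Icc.1 hj).1) (mod_cast (mem_Icc.1 hj).2)
      (neg_nonpos.2 hβ)
  rw [← mul_rpow_neg_eq_rpow_one_sub hu' β]
  simpa using card_nsmul_le_sum _ _ _ hterm

theorem sum_Icc_rpow_neg_le_one_add_integral (hβ : 0 ≤ β) {u : ℕ} (hu : 1 ≤ u) :
    ∑ j ∈ Icc 1 u, (j : ℝ) ^ (-β) ≤ 1 + ∫ x in (1 : ℝ)..u, x ^ (-β) := by
  rw [← add_sum_Ioc_eq_sum_Icc hu, ← Ico_add_one_add_one_eq_Ioc, ← sum_Ico_add']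
  have hanti : AntitoneOn (fun x : ℝ => x ^ (-β)) (Set.Icc ((1 : ℕ) : ℝ) u) :=
    (antitoneOn_rpow_Ioi_of_exponent_nonpos (neg_nonpos.2 hβ)).mono
      fun x hx => (zero_lt_one.trans_le (by simpa using hx.1) : 0 < x)
  simpa using hanti.sum_le_integral_Ico hu

theorem integral_one_rpow_neg (hβ : β ≠ 1) {u : ℝ} (hu : 1 ≤ u) :
    ∫ x in (1 : ℝ)..u, x ^ (-β) = (u ^ (1 - β) - 1) / (1 - β) := by
  rw [integral_rpow (Or.inr ⟨by contrapose! hβ; linarith, by simp [Set.uIcc_of_le hu]⟩)]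
  simp [neg_add_eq_sub]

theorem sum_Icc_rpow_neg_le_of_lt_one (hβ : 0 ≤ β) (hβ1 : β < 1) {u : ℕ} (hu : 1 ≤ u) :
    ∑ j ∈ Icc 1 u, (j : ℝ) ^ (-β) ≤ (u : ℝ) ^ (1 - β) / (1 - β) := by
  have h := sum_Icc_rpow_neg_le_one_add_integral hβ hu
  rw [integral_one_rpow_neg hβ1.ne (by exact_mod_cast hu)] at h
  have hsplit : 1 + ((u : ℝ) ^ (1 - β) - 1) / (1 - β) =
      (u : ℝ) ^ (1 - β) / (1 - β) - β / (1 - β) := by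
    field_simp [(sub_pos.2 hβ1).ne']
    ring
  have : 0 ≤ β / (1 - β) := div_nonneg hβ (sub_pos.2 hβ1).le
  linarith

theorem sum_Icc_rpow_neg_le_of_one_lt (hβ1 : 1 < β) {u : ℕ} (hu : 1 ≤ u) :
    ∑ j ∈ Icc 1 u, (j : ℝ) ^ (-β) ≤ β / (β - 1) := by
  have h := sum_Icc_rpow_neg_le_one_add_integral (by linarith) hu
  rw [integral_one_rpow_neg hβ1.ne' (by exact_mod_cast hu)] at h
  have hsplit : 1 + ((u : ℝ) ^ (1 - β) - 1) / (1 - β) =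
      β / (β - 1) - (u : ℝ) ^ (1 - β) / (β - 1) := by
    field_simp [(sub_pos.2 hβ1).ne', (sub_neg.2 hβ1).ne]
    ring
  have : 0 ≤ (u : ℝ) ^ (1 - β) / (β - 1) := by have := sub_pos.2 hβ1; positivity
  linarith

theorem sum_Icc_rpow_neg_one_eq_harmonic (u : ℕ) :
    ∑ j ∈ Icc 1 u, (j : ℝ) ^ (-1 : ℝ) = harmonic u := by
  simp [harmonic_eq_sum_Icc, rpow_neg_one]

theorem powLawProbSqrtRange_eq_div (β : ℝ) (u k : ℕ) :
    powLawProbSqrtRange β u k =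
      (∑ i ∈ Icc ⌈√k⌉₊ ⌊√(2 * k)⌋₊, (i : ℝ) ^ (-β)) / ∑ j ∈ Icc 1 u, (j : ℝ) ^ (-β) :=
  inv_mul_eq_div _ _

theorem powLawProbSqrtRange_bounds_of_lt_one (hβ : 0 ≤ β) (hβ1 : β < 1) {k u : ℕ}
    (hk : 1 ≤ k) (hu : 1 ≤ u) :
    √2 ^ (-β) / 5 * (1 - β) * (√k / u) ^ (1 - β) ≤ powLawProbSqrtRange β u k ∧
      powLawProbSqrtRange β u k ≤ 2 * (√k / u) ^ (1 - β) := by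
  have hU : 0 < (u : ℝ) ^ (1 - β) := by positivity
  rw [powLawProbSqrtRange_eq_div, div_rpow (sqrt_nonneg _) u.cast_nonneg]
  constructor
  · calc √2 ^ (-β) / 5 * (1 - β) * (√k ^ (1 - β) / (u : ℝ) ^ (1 - β))
        = √2 ^ (-β) / 5 * √k ^ (1 - β) / ((u : ℝ) ^ (1 - β) / (1 - β)) := by
          field_simp
      _ ≤ _ := div_le_div₀ (sum_nonneg fun i _ => by positivity)
          (le_sum_Icc_ceil_sqrt_floor_sqrt_two_mul_rpow_neg hβ hk)
          (zero_lt_one.trans_le (one_le_sum_Icc_rpow_neg β hu))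
          (sum_Icc_rpow_neg_le_of_lt_one hβ hβ1 hu)
  · calc _ ≤ 2 * √k ^ (1 - β) / (u : ℝ) ^ (1 - β) :=
          div_le_div₀ (by positivity) (sum_Icc_ceil_sqrt_floor_sqrt_two_mul_rpow_neg_le hβ hk) hU
            (rpow_one_sub_le_sum_Icc_rpow_neg hβ hu)
      _ = _ := mul_div_assoc _ _ _

theorem powLawProbSqrtRange_bounds_of_eq_one {k u : ℕ} (hk : 1 ≤ k) (hu : 2 ≤ u) :
    √2 ^ (-1 : ℝ) / 15 / log u ≤ powLawProbSqrtRange 1 u k ∧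
      powLawProbSqrtRange 1 u k ≤ 2 / log u := by
  have hu' : (2 : ℝ) ≤ u := by exact_mod_cast hu
  have hlog2 : log 2 ≤ log u := log_le_log two_pos hu'
  have hlog : 0 < log u := (log_pos one_lt_two).trans_le hlog2
  have hupper := sum_Icc_ceil_sqrt_floor_sqrt_two_mul_rpow_neg_le zero_le_one hk
  have hlower := le_sum_Icc_ceil_sqrt_floor_sqrt_two_mul_rpow_neg zero_le_one hk
  rw [sub_self, rpow_zero, mul_one] at hupper hlower
  have hH : log u ≤ harmonic u :=
    (log_le_log (by positivity) (by simp : (u : ℝ) ≤ ↑(u + 1))).trans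
      (by exact_mod_cast log_add_one_le_harmonic u)
  have hH' : (harmonic u : ℝ) ≤ 3 * log u := by
    have := harmonic_le_one_add_log u
    linarith [log_two_gt_d9]
  rw [powLawProbSqrtRange_eq_div, sum_Icc_rpow_neg_one_eq_harmonic]
  constructor
  · calc √2 ^ (-1 : ℝ) / 15 / log u = √2 ^ (-1 : ℝ) / 5 / (3 * log u) := by
          field_simp; norm_num
      _ ≤ _ := div_le_div₀ (sum_nonneg fun i _ => by positivity) hlower (hlog.trans_le hH) hH'
  · exact div_le_div₀ zero_le_two hupper hlog hH

theorem powLawProbSqrtRange_bounds_of_one_lt (hβ1 : 1 < β) {k u : ℕ} (hk : 1 ≤ k) (hu : 1 ≤ u) :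
    √2 ^ (-β) / 5 * ((β - 1) / β) * (k : ℝ) ^ ((1 - β) / 2) ≤ powLawProbSqrtRange β u k ∧
      powLawProbSqrtRange β u k ≤ 2 * (k : ℝ) ^ ((1 - β) / 2) := by
  have hβ : 0 ≤ β := zero_le_one.trans hβ1.le
  rw [powLawProbSqrtRange_eq_div, rpow_div_two_eq_sqrt _ k.cast_nonneg]
  constructor
  · calc √2 ^ (-β) / 5 * ((β - 1) / β) * √k ^ (1 - β)
        = √2 ^ (-β) / 5 * √k ^ (1 - β) / (β / (β - 1)) := by
          field_simp
      _ ≤ _ := div_le_div₀ (sum_nonneg fun i _ => by positivity)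
          (le_sum_Icc_ceil_sqrt_floor_sqrt_two_mul_rpow_neg hβ hk)
          (zero_lt_one.trans_le (one_le_sum_Icc_rpow_neg β hu))
          (sum_Icc_rpow_neg_le_of_one_lt hβ1 hu)
  · calc _ ≤ 2 * √k ^ (1 - β) / 1 :=
          div_le_div₀ (by positivity) (sum_Icc_ceil_sqrt_floor_sqrt_two_mul_rpow_neg_le hβ hk)
            one_pos (one_le_sum_Icc_rpow_neg β hu)
      _ = _ := div_one _

end

/-- For every fixed `β ≥ 0` there exist constants `c₁, c₂ > 0`
(depending only on `β`) such that for all integers `k ≥ 2` and all integers `u`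
with `u ≥ √(2k)`, the random variable `X ~ pow(β,u)` satisfies the stated
two-sided bounds on `Pr[⌈√k⌉ ≤ X ≤ ⌊√(2k)⌋]` in each of the three cases. -/
theorem powLaw_prob_sqrt_range_asymptotics (β : ℝ) (hβ : 0 ≤ β) :
    ∃ c₁ c₂ : ℝ, 0 < c₁ ∧ 0 < c₂ ∧ ∀ k u : ℕ, 2 ≤ k → Real.sqrt (2 * k) ≤ (u : ℝ) →
      (β < 1 →
        c₁ * (Real.sqrt k / u) ^ (1 - β) ≤ powLawProbSqrtRange β u k ∧
          powLawProbSqrtRange β u k ≤ c₂ * (Real.sqrt k / u) ^ (1 - β)) ∧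
      (β = 1 →
        c₁ / Real.log u ≤ powLawProbSqrtRange β u k ∧
          powLawProbSqrtRange β u k ≤ c₂ / Real.log u) ∧
      (1 < β →
        c₁ * (k : ℝ) ^ ((1 - β) / 2) ≤ powLawProbSqrtRange β u k ∧
          powLawProbSqrtRange β u k ≤ c₂ * (k : ℝ) ^ ((1 - β) / 2)) := by
  have two_le_u {k u : ℕ} (hk : 2 ≤ k) (hu : √(2 * k) ≤ u) : 2 ≤ u := by
    have : (2 : ℝ) ≤ √(2 * k) := le_sqrt_of_sq_le (by norm_cast; omega)
    exact_mod_cast this.trans hu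
  rcases lt_trichotomy β 1 with hβ1 | rfl | hβ1
  · refine ⟨√2 ^ (-β) / 5 * (1 - β), 2, by have := sub_pos.2 hβ1; positivity, two_pos,
      fun k u hk hu => ⟨fun _ => ?_, fun h => absurd h hβ1.ne, fun h => absurd h hβ1.not_gt⟩⟩
    exact powLawProbSqrtRange_bounds_of_lt_one hβ hβ1 (by omega) (one_le_two.trans (two_le_u hk hu))
  · refine ⟨√2 ^ (-1 : ℝ) / 15, 2, by positivity, two_pos,
      fun k u hk hu => ⟨fun h => (lt_irrefl 1 h).elim, fun _ => ?_, fun h => (lt_irrefl 1 h).elim⟩⟩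
    exact powLawProbSqrtRange_bounds_of_eq_one (by omega) (two_le_u hk hu)
  · refine ⟨√2 ^ (-β) / 5 * ((β - 1) / β), 2, by have := sub_pos.2 hβ1; positivity, two_pos,
      fun k u hk hu => ⟨fun h => absurd h hβ1.not_gt, fun h => absurd h hβ1.ne', fun _ => ?_⟩⟩
    exact powLawProbSqrtRange_bounds_of_one_lt hβ1 (by omega) (one_le_two.trans (two_le_u hk hu))
end

section
/- There exists a constant A > 0 such that for all integers n, k, λ with 2 ≤ k ≤ n/4 and λ ≥ 1, and all reals p, c with √(k/n) ≤ p ≤ √(2k/n) and √(k/n) ≤ c ≤ √(2k/n), the following inequality holds: min(1, λ·(p/2)^k) · min(1, λ·c^k·(1−c)^{2pn−k}) ≥ e^{−A·k} · min(1, (k/n)^k · λ²). -/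
/-! With `s = √(k/n)` and `M = min 1 (λ sᵏ)`, both factors on the right are at least `M` up to
an exponential loss in `k`, while `M² = min 1 ((k/n)ᵏ λ²)`. For the first factor this is `p ≥ s`,
costing `2⁻ᵏ ≥ e⁻ᵏ`. For the second, `c ≥ s` and `1 - c ≥ e^{-4c}` (as `c ≤ √(1/2) < 3/4`),
while `c (2pn - k) ≤ 2pcn ≤ 4k`, so that `(1 - c)^{2pn-k} ≥ e^{-16k}`. Hence `A = 17` works. -/

open Real

lemma mul_min_one_le_min_one {t x y : ℝ} (ht₀ : 0 ≤ t) (ht₁ : t ≤ 1) (h : t * x ≤ y) :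
    t * min 1 x ≤ min 1 y :=
  le_min ((mul_le_of_le_one_right ht₀ (min_le_left _ _)).trans ht₁)
    ((mul_le_mul_of_nonneg_left (min_le_right _ _) ht₀).trans h)

lemma min_one_mul_self {x : ℝ} (hx : 0 ≤ x) : min 1 x * min 1 x = min 1 (x * x) := by
  rcases le_total x 1 with h | h
  · rw [min_eq_right h, min_eq_right (mul_le_one₀ h hx h)]
  · rw [min_eq_left h, min_eq_left (one_le_mul_of_one_le_of_one_le h h), one_mul]

lemma exp_neg_le_half_pow (k : ℕ) : exp (-k) ≤ (1 / 2) ^ k := by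
  have h2 : 2 ≤ exp 1 := by linarith [add_one_le_exp 1]
  calc exp (-k) = exp (-1) ^ k := by rw [← exp_nat_mul]; ring_nf
    _ ≤ (1 / 2) ^ k := by
      gcongr
      rw [exp_neg, ← one_div]
      exact one_div_le_one_div_of_le two_pos h2

lemma exp_neg_four_mul_le_one_sub {c : ℝ} (hc₀ : 0 ≤ c) (hc : c ≤ 3 / 4) :
    exp (-(4 * c)) ≤ 1 - c := by
  rw [exp_neg, inv_le_iff_one_le_mul₀ (exp_pos _)]
  nlinarith [add_one_le_exp (4 * c)]

lemma exp_neg_four_mul_le_one_sub_rpow {c E B : ℝ} (hc₀ : 0 ≤ c) (hc : c ≤ 3 / 4) (hE : 0 ≤ E)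
    (hcE : c * E ≤ B) : exp (-(4 * B)) ≤ (1 - c) ^ E :=
  calc exp (-(4 * B)) ≤ exp (-(4 * c) * E) := exp_le_exp.2 (by linarith)
    _ = exp (-(4 * c)) ^ E := exp_mul _ _
    _ ≤ (1 - c) ^ E := rpow_le_rpow (exp_pos _).le (exp_neg_four_mul_le_one_sub hc₀ hc) hE

lemma half_pow_mul_min_one_le {lam s p : ℝ} (k : ℕ) (hlam : 0 ≤ lam) (hs : 0 ≤ s) (hsp : s ≤ p) :
    (1 / 2) ^ k * min 1 (lam * s ^ k) ≤ min 1 (lam * (p / 2) ^ k) := by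
  refine mul_min_one_le_min_one (by positivity) (pow_le_one₀ (by norm_num) (by norm_num)) ?_
  calc (1 / 2) ^ k * (lam * s ^ k) = lam * (s / 2) ^ k := by ring
    _ ≤ lam * (p / 2) ^ k := by gcongr

lemma exp_neg_mul_min_one_le {lam s c E B : ℝ} (k : ℕ) (hlam : 0 ≤ lam) (hs : 0 ≤ s)
    (hsc : s ≤ c) (hc : c ≤ 3 / 4) (hE : 0 ≤ E) (hcE : c * E ≤ B) :
    exp (-(4 * B)) * min 1 (lam * s ^ k) ≤ min 1 (lam * c ^ k * (1 - c) ^ E) := by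
  have hc₀ : 0 ≤ c := hs.trans hsc
  refine mul_min_one_le_min_one (exp_pos _).le (exp_le_one_iff.2 (by nlinarith)) ?_
  calc exp (-(4 * B)) * (lam * s ^ k) ≤ (1 - c) ^ E * (lam * c ^ k) :=
        mul_le_mul (exp_neg_four_mul_le_one_sub_rpow hc₀ hc hE hcE) (by gcongr) (by positivity)
          (rpow_nonneg (by linarith) _)
    _ = lam * c ^ k * (1 - c) ^ E := by ring

lemma two_mul_mul_sub_nonneg {n k p : ℝ} (hn : 0 < n) (hk : 0 ≤ k) (hkn : k ≤ n)
    (hp : √(k / n) ≤ p) : 0 ≤ 2 * p * n - k := by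
  have hq : k / n ≤ 1 := (div_le_one hn).2 hkn
  have hqp : k / n ≤ p := (le_sqrt_of_sq_le (by nlinarith [div_nonneg hk hn.le])).trans hp
  have : k ≤ p * n := by rwa [div_le_iff₀ hn] at hqp
  linarith

lemma mul_two_mul_sub_le {n k p c : ℝ} (hn : 0 < n) (hk : 0 ≤ k) (hp : 0 ≤ p) (hc : 0 ≤ c)
    (hp₂ : p ≤ √(2 * k / n)) (hc₂ : c ≤ √(2 * k / n)) : c * (2 * p * n - k) ≤ 4 * k := by
  have hcp : c * p ≤ 2 * k / n :=
    (mul_le_mul hc₂ hp₂ hp (sqrt_nonneg _)).trans_eq (mul_self_sqrt (by positivity))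
  have : c * p * n ≤ 2 * k := by rwa [le_div_iff₀ hn] at hcp
  nlinarith

/-- There exists a constant `A > 0` such that for all integers
`n, k, λ` with `2 ≤ k ≤ n/4` and `λ ≥ 1`, and all reals `p, c` with
`√(k/n) ≤ p ≤ √(2k/n)` and `√(k/n) ≤ c ≤ √(2k/n)`,
`min(1, λ(p/2)^k) · min(1, λ c^k (1-c)^(2pn-k)) ≥ e^(-Ak) · min(1, (k/n)^k λ²)`. -/
theorem success_prob_one_iteration :
    ∃ A : ℝ, 0 < A ∧ ∀ n k lam : ℕ, ∀ p c : ℝ,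
      2 ≤ k → 4 * k ≤ n → 1 ≤ lam →
      Real.sqrt ((k : ℝ) / n) ≤ p → p ≤ Real.sqrt (2 * (k : ℝ) / n) →
      Real.sqrt ((k : ℝ) / n) ≤ c → c ≤ Real.sqrt (2 * (k : ℝ) / n) →
      Real.exp (-(A * k)) * min 1 (((k : ℝ) / n) ^ k * (lam : ℝ) ^ 2)
        ≤ min 1 ((lam : ℝ) * (p / 2) ^ k) *
          min 1 ((lam : ℝ) * c ^ k * (1 - c) ^ (2 * p * n - (k : ℝ))) := by
  refine ⟨17, by norm_num, fun n k lam p c hk hkn _ hp₁ hp₂ hc₁ hc₂ => ?_⟩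
  have hk₀ : (0 : ℝ) < k := by exact_mod_cast (by omega : 0 < k)
  have hkn' : 4 * (k : ℝ) ≤ n := by exact_mod_cast hkn
  have hn : (0 : ℝ) < n := by linarith
  have hlam : (0 : ℝ) ≤ lam := Nat.cast_nonneg _
  set s := √((k : ℝ) / n) with hs_def
  have hs : 0 ≤ s := sqrt_nonneg _
  have hc : c ≤ 3 / 4 := hc₂.trans <| by
    rw [sqrt_le_left (by norm_num), div_le_iff₀ hn]; linarith
  have hE := two_mul_mul_sub_nonneg hn hk₀.le (by linarith) hp₁
  have hcE := mul_two_mul_sub_le hn hk₀.le (hs.trans hp₁) (hs.trans hc₁) hp₂ hc₂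
  have hq : ((k : ℝ) / n) ^ k * lam ^ 2 = lam * s ^ k * (lam * s ^ k) := by
    rw [← sq_sqrt (by positivity : (0 : ℝ) ≤ k / n), ← hs_def]; ring
  have hA : exp (-(17 * k)) ≤ (1 / 2) ^ k * exp (-(4 * (4 * k))) := by
    rw [show -(17 * (k : ℝ)) = -k + -(4 * (4 * k)) by ring, exp_add]
    gcongr
    exact exp_neg_le_half_pow k
  calc exp (-(17 * k)) * min 1 (((k : ℝ) / n) ^ k * lam ^ 2)
      ≤ ((1 / 2) ^ k * exp (-(4 * (4 * k)))) * (min 1 (lam * s ^ k) * min 1 (lam * s ^ k)) := by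
        rw [hq, min_one_mul_self (by positivity)]
        gcongr
    _ = ((1 / 2) ^ k * min 1 (lam * s ^ k)) * (exp (-(4 * (4 * k))) * min 1 (lam * s ^ k)) := by
        ring
    _ ≤ _ := mul_le_mul (half_pow_mul_min_one_le k hlam hs hp₁)
        (exp_neg_mul_min_one_le k hlam hs hc₁ hc hE hcE) (by positivity)
        (le_min zero_le_one (by have := hs.trans hp₁; positivity))
end

section
/- For every real β with 1 < β < 3 there exists a constant c > 0 (depending only on β) such that for every real m ≥ 1 and every integer u with u ≥ m, the random variable X ~ pow(β,u) satisfies E[min(1, X²/m²)] ≥ c·m^{1−β}. -/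
open Finset

/-- The expectation `E[min(1, X²/m²)]` for `X ~ pow(β,u)`, namely
`C_{β,u} · ∑_{i=1}^{u} i^(-β) · min(1, i²/m²)`. -/
noncomputable def powLawTruncatedSecondMoment (β : ℝ) (u : ℕ) (m : ℝ) : ℝ :=
  (∑ j ∈ Finset.Icc 1 u, (j : ℝ) ^ (-β))⁻¹ *
    ∑ i ∈ Finset.Icc 1 u, (i : ℝ) ^ (-β) * min 1 ((i : ℝ) ^ 2 / m ^ 2)

/-!
The normalising constant `∑_{j ≤ u} j^(-β)` is bounded by `∑_j j^(-β) < ∞` since `β > 1`.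
In the numerator keep only the indices `i ≤ n := ⌊m⌋`, where the truncation is inactive:
there `i^(-β) ≥ n^(-β)` and `∑_{i ≤ n} i² ≥ n³/3`, so the numerator is at least
`n^(3-β) / (3 m²)`, and `n ≥ m/2` together with `β ≤ 3` turns this into a multiple of `m^(1-β)`.
-/

theorem cube_div_three_le_sum_Icc_sq (n : ℕ) :
    (n : ℝ) ^ 3 / 3 ≤ ∑ i ∈ Icc 1 n, (i : ℝ) ^ 2 := by
  induction n with
  | zero => simp
  | succ k ih =>
    rw [sum_Icc_succ_top (by omega)]
    push_cast
    nlinarith [Nat.cast_nonneg (α := ℝ) k]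

theorem rpow_three_sub_div_three_le_sum_Icc_rpow_neg_mul_sq {β : ℝ} (hβ : 0 ≤ β) {n : ℕ}
    (hn : 0 < n) :
    (n : ℝ) ^ (3 - β) / 3 ≤ ∑ i ∈ Icc 1 n, (i : ℝ) ^ (-β) * (i : ℝ) ^ 2 := by
  have hn' : (0 : ℝ) < n := by exact_mod_cast hn
  calc (n : ℝ) ^ (3 - β) / 3 = (n : ℝ) ^ (-β) * ((n : ℝ) ^ 3 / 3) := by
        rw [show (3 : ℝ) - β = -β + (3 : ℕ) by push_cast; ring,
          Real.rpow_add_natCast hn'.ne']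
        ring
    _ ≤ (n : ℝ) ^ (-β) * ∑ i ∈ Icc 1 n, (i : ℝ) ^ 2 := by
        gcongr
        exact cube_div_three_le_sum_Icc_sq n
    _ = ∑ i ∈ Icc 1 n, (n : ℝ) ^ (-β) * (i : ℝ) ^ 2 := mul_sum ..
    _ ≤ ∑ i ∈ Icc 1 n, (i : ℝ) ^ (-β) * (i : ℝ) ^ 2 := by
        refine sum_le_sum fun i hi => mul_le_mul_of_nonneg_right ?_ (sq_nonneg _)
        obtain ⟨hi1, hin⟩ := mem_Icc.mp hi
        exact Real.rpow_le_rpow_of_nonpos (by exact_mod_cast hi1) (by exact_mod_cast hin)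
          (by linarith)

theorem sum_Icc_rpow_neg_mul_sq_div_le_sum_rpow_neg_mul_min {β m : ℝ} {n u : ℕ}
    (hnm : (n : ℝ) ≤ m) (hnu : n ≤ u) :
    (∑ i ∈ Icc 1 n, (i : ℝ) ^ (-β) * (i : ℝ) ^ 2) / m ^ 2 ≤
      ∑ i ∈ Icc 1 u, (i : ℝ) ^ (-β) * min 1 ((i : ℝ) ^ 2 / m ^ 2) := by
  calc (∑ i ∈ Icc 1 n, (i : ℝ) ^ (-β) * (i : ℝ) ^ 2) / m ^ 2
      = ∑ i ∈ Icc 1 n, (i : ℝ) ^ (-β) * min 1 ((i : ℝ) ^ 2 / m ^ 2) := by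
        rw [sum_div]
        refine sum_congr rfl fun i hi => ?_
        have him : (i : ℝ) ≤ m := (Nat.cast_le.mpr (mem_Icc.mp hi).2).trans hnm
        rw [min_eq_right (div_le_one_of_le₀ (by gcongr) (sq_nonneg m)), mul_div_assoc]
    _ ≤ ∑ i ∈ Icc 1 u, (i : ℝ) ^ (-β) * min 1 ((i : ℝ) ^ 2 / m ^ 2) :=
        sum_le_sum_of_subset_of_nonneg (Icc_subset_Icc_right hnu) fun i _ _ => by positivity

theorem half_le_natFloor {m : ℝ} (hm : 1 ≤ m) : m / 2 ≤ ⌊m⌋₊ := by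
  have hfloor : (1 : ℝ) ≤ ⌊m⌋₊ := by exact_mod_cast Nat.floor_pos.mpr hm
  linarith [Nat.sub_one_lt_floor m]

theorem two_rpow_sub_three_div_three_mul_rpow_le_sum_rpow_neg_mul_min {β m : ℝ}
    (hβ0 : 0 ≤ β) (hβ3 : β ≤ 3) {u : ℕ} (hm : 1 ≤ m) (hmu : m ≤ u) :
    (2 : ℝ) ^ (β - 3) / 3 * m ^ (1 - β) ≤
      ∑ i ∈ Icc 1 u, (i : ℝ) ^ (-β) * min 1 ((i : ℝ) ^ 2 / m ^ 2) := by
  have hm0 : 0 < m := by linarith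
  set n := ⌊m⌋₊
  have hnm : (n : ℝ) ≤ m := Nat.floor_le hm0.le
  have hn : 0 < n := Nat.floor_pos.mpr hm
  calc (2 : ℝ) ^ (β - 3) / 3 * m ^ (1 - β) = (m / 2) ^ (3 - β) / 3 / m ^ 2 := by
        rw [Real.div_rpow hm0.le zero_le_two, show β - 3 = -(3 - β) by ring,
          Real.rpow_neg zero_le_two, show 3 - β = (1 - β) + (2 : ℕ) by push_cast; ring,
          Real.rpow_add_natCast hm0.ne']
        field_simp
    _ ≤ (n : ℝ) ^ (3 - β) / 3 / m ^ 2 := by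
        gcongr
        exact half_le_natFloor hm
    _ ≤ (∑ i ∈ Icc 1 n, (i : ℝ) ^ (-β) * (i : ℝ) ^ 2) / m ^ 2 := by
        gcongr
        exact rpow_three_sub_div_three_le_sum_Icc_rpow_neg_mul_sq hβ0 hn
    _ ≤ _ := sum_Icc_rpow_neg_mul_sq_div_le_sum_rpow_neg_mul_min hnm
        (by exact_mod_cast hnm.trans hmu)

theorem sum_Icc_rpow_neg_le_tsum {β : ℝ} (hβ : 1 < β) (u : ℕ) :
    ∑ j ∈ Icc 1 u, (j : ℝ) ^ (-β) ≤ ∑' j : ℕ, (j : ℝ) ^ (-β) :=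
  (Real.summable_nat_rpow.mpr (by linarith)).sum_le_tsum _ fun j _ => by positivity

theorem one_le_tsum_nat_rpow_neg {β : ℝ} (hβ : 1 < β) : 1 ≤ ∑' j : ℕ, (j : ℝ) ^ (-β) := by
  simpa using (Real.summable_nat_rpow.mpr (by linarith)).le_tsum 1 fun j _ => by positivity

theorem sum_Icc_rpow_neg_pos (β : ℝ) {u : ℕ} (hu : 0 < u) :
    0 < ∑ j ∈ Icc 1 u, (j : ℝ) ^ (-β) :=
  sum_pos (fun j hj => Real.rpow_pos_of_pos (by exact_mod_cast (mem_Icc.mp hj).1) _)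
    ⟨1, mem_Icc.mpr ⟨le_rfl, hu⟩⟩

/-- For every real `β` with `1 < β < 3` there exists a constant
`c > 0` (depending only on `β`) such that for every real `m ≥ 1` and every integer
`u ≥ m`, the random variable `X ~ pow(β,u)` satisfies
`E[min(1, X²/m²)] ≥ c · m^(1-β)`. -/
theorem powLaw_truncated_second_moment_lower (β : ℝ) (hβ1 : 1 < β) (hβ3 : β < 3) :
    ∃ c : ℝ, 0 < c ∧ ∀ (m : ℝ) (u : ℕ), 1 ≤ m → m ≤ (u : ℝ) →
      c * m ^ (1 - β) ≤ powLawTruncatedSecondMoment β u m := by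
  set K := ∑' j : ℕ, (j : ℝ) ^ (-β)
  have hK : 0 < K := one_pos.trans_le (one_le_tsum_nat_rpow_neg hβ1)
  refine ⟨K⁻¹ * ((2 : ℝ) ^ (β - 3) / 3), by positivity, fun m u hm hmu => ?_⟩
  have hu : 0 < u := by exact_mod_cast one_pos.trans_le (hm.trans hmu)
  unfold powLawTruncatedSecondMoment
  rw [mul_assoc]
  exact mul_le_mul (inv_anti₀ (sum_Icc_rpow_neg_pos β hu) (sum_Icc_rpow_neg_le_tsum hβ1 u))
    (two_rpow_sub_three_div_three_mul_rpow_le_sum_rpow_neg_mul_min (by linarith) hβ3.le hm hmu)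
    (by positivity) (by positivity)
end

section
/- If β_λ > 1, β_p > 1 and β_c > 1, then there exists a constant C > 0 (depending only on β_λ, β_p, β_c) such that for all integers N ≥ 2 and all integers u_λ ≥ 1 and 1 ≤ u_p, u_c ≤ √N, the heavy-tailed (1+(λ,λ)) GA maximizing OneMax on {0,1}^N satisfies E[T_I] ≤ C·N·ln(N), where T_I is the first iteration index t ≥ 0 at which the current solution x_t is the all-ones string. -/
open Finset
open scoped ENNReal Classical

/-- Probability mass function of the power-law distribution `pow(β,u)` on `[1..u]`:
`Pr[X = i] = C_{β,u} · i^(-β)` for `i ∈ [1..u]`, where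
`C_{β,u} = (∑_{j=1}^{u} j^(-β))⁻¹`. -/
noncomputable def powMass (β : ℝ) (u : ℕ) (i : ℕ) : ℝ≥0∞ :=
  if i ∈ Finset.Icc 1 u then
    ENNReal.ofReal ((∑ j ∈ Finset.Icc 1 u, (j : ℝ) ^ (-β))⁻¹ * (i : ℝ) ^ (-β))
  else 0

/-- Probability mass function of the binomial distribution `Bin(N,p)`. -/
noncomputable def binomMass (N : ℕ) (p : ℝ) (ℓ : ℕ) : ℝ≥0∞ :=
  if ℓ ≤ N then ENNReal.ofReal ((N.choose ℓ : ℝ) * p ^ ℓ * (1 - p) ^ (N - ℓ)) else 0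

/-- Probability mass at `z` of a mutation offspring of `x`: flip the bits of `x`
in a uniformly random `ℓ`-element set of positions.  The offspring `z` arises iff
it differs from `x` in exactly `ℓ` positions, and then with probability
`1 / (N choose ℓ)`. -/
noncomputable def mutMass {N : ℕ} (x : Fin N → Bool) (ℓ : ℕ) (z : Fin N → Bool) : ℝ≥0∞ :=
  if (Finset.univ.filter fun i => z i ≠ x i).card = ℓ then ((N.choose ℓ : ℝ≥0∞))⁻¹ else 0

/-- Probability mass at `z` of a crossover offspring of `x` and `x'` with crossover
bias `c`: independently for every position, take the bit of `x'` with probability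
`c` and the bit of `x` with probability `1 - c`. -/
noncomputable def crossMass {N : ℕ} (x x' : Fin N → Bool) (c : ℝ) (z : Fin N → Bool) : ℝ≥0∞ :=
  ∏ i : Fin N,
    ((if z i = x' i then ENNReal.ofReal c else 0) +
      (if z i = x i then ENNReal.ofReal (1 - c) else 0))

/-- Probability mass at `z` of the winner among `lam` independent samples from the
mass function `q`, where a winner is an offspring of maximal `f`-value, ties broken
uniformly at random. -/
noncomputable def bestOfMass {σ : Type*} [Fintype σ] (f : σ → ℝ) (lam : ℕ)
    (q : σ → ℝ≥0∞) (z : σ) : ℝ≥0∞ :=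
  ∑' w : Fin lam → σ, (∏ j, q (w j)) *
    (((Finset.univ.filter fun j => w j = z ∧ ∀ j', f (w j') ≤ f (w j)).card : ℝ≥0∞) /
      ((Finset.univ.filter fun j => ∀ j', f (w j') ≤ f (w j)).card : ℝ≥0∞))

/-- Transition probability of one iteration of the heavy-tailed `(1+(λ,λ))` GA
maximizing `f : {0,1}^N → ℝ` with hyperparameters `βl, ul, βp, up, βc, uc`, from
current solution `x` to next solution `y`: sample `P ~ pow(βp,up)`,
`Q ~ pow(βc,uc)`, `λ ~ pow(βl,ul)` independently, set `p = P/√N`, `c = Q/√N`,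
sample `ℓ ~ Bin(N,p)`; create `λ` mutation offspring (each flipping a fresh
uniformly random `ℓ`-element set of bits of `x`) and let `x'` be a best one (ties
uniform); create `λ` crossover offspring of `x` and `x'` with bias `c` and let
`yw` be a best one (ties uniform); accept `yw` iff `f(yw) ≥ f(x)`. -/
noncomputable def gaStep (N : ℕ) (βl βp βc : ℝ) (ul up uc : ℕ)
    (f : (Fin N → Bool) → ℝ) (x y : Fin N → Bool) : ℝ≥0∞ :=
  ∑' (P : ℕ) (Q : ℕ) (lam : ℕ) (ℓ : ℕ),
    powMass βp up P * powMass βc uc Q * powMass βl ul lam *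
      binomMass N ((P : ℝ) / Real.sqrt N) ℓ *
      ∑' x' : Fin N → Bool, bestOfMass f lam (mutMass x ℓ) x' *
        ∑' yw : Fin N → Bool,
          bestOfMass f lam (crossMass x x' ((Q : ℝ) / Real.sqrt N)) yw *
            (if f x ≤ f yw then (if y = yw then 1 else 0) else (if y = x then 1 else 0))

/-- Distribution of the current solution `x_t` of the heavy-tailed `(1+(λ,λ))` GA
after `t` iterations: `x_0` is uniformly random in `{0,1}^N`, and each iteration
performs `gaStep`. -/
noncomputable def gaMarginal (N : ℕ) (βl βp βc : ℝ) (ul up uc : ℕ)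
    (f : (Fin N → Bool) → ℝ) : ℕ → (Fin N → Bool) → ℝ≥0∞
  | 0 => fun _ => ((2 : ℝ≥0∞) ^ N)⁻¹
  | t + 1 => fun y =>
      ∑' x : Fin N → Bool, gaMarginal N βl βp βc ul up uc f t x * gaStep N βl βp βc ul up uc f x y

/-- Expected number of iterations `E[T_I]` until the current solution of the GA
lies in the (absorbing) set of good solutions, computed as
`∑_{t≥0} Pr[x_t not good]`. -/
noncomputable def gaExpectedIterations (N : ℕ) (βl βp βc : ℝ) (ul up uc : ℕ)
    (f : (Fin N → Bool) → ℝ) (good : (Fin N → Bool) → Prop) : ℝ≥0∞ :=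
  ∑' t : ℕ, ∑' x : Fin N → Bool,
    if good x then 0 else gaMarginal N βl βp βc ul up uc f t x

/-- The OneMax fitness: the number of one-bits of `x ∈ {0,1}^N`. -/
noncomputable def oneMax (N : ℕ) (x : Fin N → Bool) : ℝ :=
  ((Finset.univ.filter fun i => x i = true).card : ℝ)

/-!
Fitness levels on the number `d` of zero bits. Selection is elitist, so `d` never increases.
With probability at least `ζ(β_p)⁻¹ ζ(β_c)⁻¹ ζ(β_λ)⁻¹` an iteration draws `P = Q = λ = 1`;
then `p = c = 1/√N`, and mutation followed by crossover flips every bit independently with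
probability `1/N`, so one of the `d` zero bits is flipped alone with probability at least
`d (1/N) (1 - 1/N)^(N-1) ≥ d / (e N)`. The mass at levels `≥ d` is a potential that drops in
every iteration by at least this probability times the mass at level `d`, so the expected time
spent on level `d` is at most `e ζ(β_p) ζ(β_c) ζ(β_λ) N / d`; summing over `d` gives
`O(N H_N) = O(N log N)`.
-/

lemma mem_Icc_of_powMass_ne_zero {β : ℝ} {u i : ℕ} (h : powMass β u i ≠ 0) : i ∈ Icc 1 u := by
  by_contra hi
  exact h (if_neg hi)

lemma tsum_powMass_le_one (β : ℝ) (u : ℕ) : ∑' i, powMass β u i ≤ 1 := by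
  have hnonneg : ∀ j ∈ Icc 1 u, 0 ≤ (j : ℝ) ^ (-β) := fun j _ => by positivity
  have hS := sum_nonneg hnonneg
  rw [tsum_eq_sum (f := powMass β u) (s := Icc 1 u) fun i hi => if_neg hi]
  simp only [powMass]
  rw [sum_congr rfl fun i hi => if_pos hi, ← ENNReal.ofReal_sum_of_nonneg
    fun i hi => mul_nonneg (inv_nonneg.2 hS) (hnonneg i hi), ← mul_sum]
  exact ENNReal.ofReal_le_one.2 (inv_mul_le_one_of_le₀ le_rfl hS)

lemma tsum_binomMass_le_one (N : ℕ) {p : ℝ} (hp0 : 0 ≤ p) (hp1 : p ≤ 1) :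
    ∑' ℓ, binomMass N p ℓ ≤ 1 := by
  rw [tsum_eq_sum (f := binomMass N p) (s := range (N + 1)) fun ℓ hℓ =>
    if_neg (by simpa [Nat.lt_succ_iff] using hℓ)]
  simp only [binomMass]
  rw [sum_congr rfl fun ℓ hℓ => if_pos (Nat.lt_succ_iff.1 (mem_range.1 hℓ)),
    ← ENNReal.ofReal_sum_of_nonneg fun ℓ _ => by positivity]
  have hbinom := add_pow p (1 - p) N
  rw [add_sub_cancel, one_pow] at hbinom
  exact ENNReal.ofReal_le_one.2 ((sum_congr rfl fun _ _ => by ring).trans hbinom.symm).le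

lemma card_hammingSphere_le_choose {N : ℕ} (x : Fin N → Bool) (ℓ : ℕ) :
    #{z : Fin N → Bool | #{i | z i ≠ x i} = ℓ} ≤ N.choose ℓ := by
  have hinj : Set.InjOn (fun z : Fin N → Bool => ({i | z i ≠ x i} : Finset (Fin N))) Set.univ := by
    intro a _ b _ hab
    funext i
    have hi := congrArg (i ∈ ·) hab
    simp only [mem_filter, mem_univ, true_and] at hi
    revert hi
    cases a i <;> cases b i <;> cases x i <;> simp
  calc _ ≤ #(powersetCard ℓ (univ : Finset (Fin N))) :=
        card_le_card_of_injOn _ (fun z hz => by simpa using hz) (hinj.mono (by simp))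
    _ = N.choose ℓ := by simp

lemma tsum_mutMass_le_one {N : ℕ} (x : Fin N → Bool) (ℓ : ℕ) : ∑' z, mutMass x ℓ z ≤ 1 := by
  rw [tsum_fintype]
  simp only [mutMass, sum_ite, sum_const, nsmul_eq_mul]
  calc _ ≤ (N.choose ℓ : ℝ≥0∞) * (N.choose ℓ : ℝ≥0∞)⁻¹ := by
        rw [mul_zero, add_zero]
        gcongr
        exact_mod_cast card_hammingSphere_le_choose x ℓ
    _ ≤ 1 := ENNReal.mul_inv_le_one _

lemma tsum_crossMass_le_one {N : ℕ} (x x' : Fin N → Bool) {c : ℝ} (hc0 : 0 ≤ c) (hc1 : c ≤ 1) :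
    ∑' z, crossMass x x' c z ≤ 1 := by
  have hbit : ∀ i, ∑ b : Bool, ((if b = x' i then ENNReal.ofReal c else 0) +
      (if b = x i then ENNReal.ofReal (1 - c) else 0)) = 1 := fun i => by
    rw [sum_add_distrib, sum_ite_eq', sum_ite_eq', if_pos (mem_univ _), if_pos (mem_univ _),
      ← ENNReal.ofReal_add hc0 (by linarith)]
    simp
  rw [tsum_fintype]
  refine le_of_eq ?_
  calc _ = ∏ i, ∑ b : Bool, ((if b = x' i then ENNReal.ofReal c else 0) +
        (if b = x i then ENNReal.ofReal (1 - c) else 0)) := (Fintype.prod_sum _).symm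
    _ = 1 := by simp only [hbit, prod_const_one]

lemma tsum_card_filter_eq_and_div_le_one {ι σ : Type*} [Fintype ι] [Fintype σ] (w : ι → σ)
    (P : ι → Prop) : ∑' z, (#{j | w j = z ∧ P j} : ℝ≥0∞) / #{j | P j} ≤ 1 := by
  have hfib : ∑ z, #{j | w j = z ∧ P j} = #{j | P j} := by
    rw [card_eq_sum_card_fiberwise (f := w) (t := univ) fun _ _ => mem_univ _]
    simp only [filter_filter, and_comm]
  simp only [tsum_fintype, div_eq_mul_inv, ← sum_mul]
  rw [← Nat.cast_sum, hfib]
  exact ENNReal.mul_inv_le_one _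

lemma tsum_bestOfMass_le_one {σ : Type*} [Fintype σ] (f : σ → ℝ) (lam : ℕ) {q : σ → ℝ≥0∞}
    (hq : ∑' z, q z ≤ 1) : ∑' z, bestOfMass f lam q z ≤ 1 := by
  simp only [bestOfMass]
  rw [ENNReal.tsum_comm]
  calc _ ≤ ∑' w : Fin lam → σ, ∏ j, q (w j) := ENNReal.tsum_le_tsum fun w => by
        rw [ENNReal.tsum_mul_left]
        refine mul_le_of_le_one_right' ?_
        convert tsum_card_filter_eq_and_div_le_one w fun j => ∀ j', f (w j') ≤ f (w j)
    _ = (∑ z, q z) ^ lam := by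
        rw [tsum_fintype, Fintype.sum_pow]
    _ ≤ 1 := pow_le_one₀ bot_le (by simpa [tsum_fintype] using hq)

lemma bestOfMass_one {σ : Type*} [Fintype σ] (f : σ → ℝ) (q : σ → ℝ≥0∞) (z : σ) :
    bestOfMass f 1 q z = q z := by
  rw [bestOfMass, tsum_fintype, ← (Equiv.funUnique (Fin 1) σ).symm.sum_comp]
  simp [Equiv.funUnique, Finset.filter_true_of_mem, apply_ite Finset.card]

lemma tsum_tsum_mul_le_tsum {ι κ : Type*} {a : ι → ℝ≥0∞} {r : ι → κ → ℝ≥0∞}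
    (h : ∀ v, a v ≠ 0 → ∑' y, r v y ≤ 1) : ∑' y, ∑' v, a v * r v y ≤ ∑' v, a v := by
  rw [ENNReal.tsum_comm]
  refine ENNReal.tsum_le_tsum fun v => ?_
  rw [ENNReal.tsum_mul_left]
  by_cases hv : a v = 0
  · simp [hv]
  · exact mul_le_of_le_one_right' (h v hv)

lemma tsum_le_inv_of_potential_drop (A U : ℕ → ℝ≥0∞) (π : ℝ≥0∞) (h0 : U 0 ≤ 1)
    (hdrop : ∀ t, U (t + 1) + π * A t ≤ U t) : ∑' t, A t ≤ π⁻¹ := by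
  have hpartial : ∀ T, π * ∑ t ∈ range T, A t + U T ≤ 1 := by
    intro T
    induction T with
    | zero => simpa using h0
    | succ T ih =>
      calc π * ∑ t ∈ range (T + 1), A t + U (T + 1)
          = π * ∑ t ∈ range T, A t + (U (T + 1) + π * A T) := by rw [sum_range_succ]; ring
        _ ≤ π * ∑ t ∈ range T, A t + U T := by gcongr; exact hdrop T
        _ ≤ 1 := ih
  refine ENNReal.tsum_le_of_sum_range_le fun T => ?_
  rw [ENNReal.le_inv_iff_mul_le, mul_comm]
  exact le_self_add.trans (hpartial T)

section FitnessLevels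

variable {α : Type*} (k : α → α → ℝ≥0∞) (lv : α → ℕ)

lemma tsum_kernel_levelGe_add_ite_le {x : α} {d : ℕ} {π : ℝ≥0∞} (hk : ∑' y, k x y ≤ 1)
    (hmono : ∀ y, lv x < lv y → k x y = 0)
    (himp : lv x = d → π ≤ ∑' y, if lv y < d then k x y else 0) :
    (∑' y, if d ≤ lv y then k x y else 0) + (if lv x = d then π else 0) ≤
      if d ≤ lv x then 1 else 0 := by
  have hsplit : (∑' y, if d ≤ lv y then k x y else 0) + (∑' y, if lv y < d then k x y else 0) =
      ∑' y, k x y := by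
    rw [← ENNReal.tsum_add]
    exact tsum_congr fun y => by split_ifs <;> first | omega | simp
  rcases lt_trichotomy (lv x) d with hlt | heq | hgt
  · have hstay : (∑' y, if d ≤ lv y then k x y else 0) = 0 :=
      ENNReal.tsum_eq_zero.2 fun y => by
        split_ifs with h
        exacts [hmono y (by omega), rfl]
    simp [hstay, hlt.ne, hlt.not_ge]
  · rw [if_pos heq, if_pos heq.ge]
    calc _ ≤ (∑' y, if d ≤ lv y then k x y else 0) + ∑' y, if lv y < d then k x y else 0 := by
          gcongr; exact himp heq
      _ ≤ 1 := hsplit.le.trans hk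
  · rw [if_neg hgt.ne', if_pos hgt.le, add_zero]
    exact le_self_add.trans (hsplit.le.trans hk)

lemma tsum_levelGe_step_add_mul_le {μ μ' : α → ℝ≥0∞} (hμ' : ∀ y, μ' y = ∑' x, μ x * k x y) {d : ℕ}
    {π : ℝ≥0∞} (hk : ∀ x, ∑' y, k x y ≤ 1) (hmono : ∀ x y, lv x < lv y → k x y = 0)
    (himp : ∀ x, lv x = d → π ≤ ∑' y, if lv y < d then k x y else 0) :
    (∑' y, if d ≤ lv y then μ' y else 0) + π * ∑' x, (if lv x = d then μ x else 0) ≤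
      ∑' x, if d ≤ lv x then μ x else 0 := by
  have hpush : ∀ y, (if d ≤ lv y then μ' y else 0) = ∑' x, μ x * if d ≤ lv y then k x y else 0 :=
    fun y => by split_ifs <;> simp [hμ']
  calc _ = ∑' x, μ x * ((∑' y, if d ≤ lv y then k x y else 0) + if lv x = d then π else 0) := by
        rw [tsum_congr hpush, ENNReal.tsum_comm, ← ENNReal.tsum_mul_left, ← ENNReal.tsum_add]
        refine tsum_congr fun x => ?_
        rw [mul_add, ENNReal.tsum_mul_left]
        split_ifs <;> simp [mul_comm]
    _ ≤ ∑' x, μ x * if d ≤ lv x then 1 else 0 := ENNReal.tsum_le_tsum fun x =>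
        mul_le_mul_right (tsum_kernel_levelGe_add_ite_le k lv (hk x) (hmono x) (himp x)) _
    _ = _ := tsum_congr fun x => by split_ifs <;> simp

variable (μ : ℕ → α → ℝ≥0∞) (π : ℕ → ℝ≥0∞)

lemma tsum_levelMass_le_inv (hμ : ∀ t y, μ (t + 1) y = ∑' x, μ t x * k x y)
    (h0 : ∑' x, μ 0 x ≤ 1) (hk : ∀ x, ∑' y, k x y ≤ 1) (hmono : ∀ x y, lv x < lv y → k x y = 0)
    (himp : ∀ x, π (lv x) ≤ ∑' y, if lv y < lv x then k x y else 0) (d : ℕ) :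
    ∑' t, ∑' x, (if lv x = d then μ t x else 0) ≤ (π d)⁻¹ :=
  tsum_le_inv_of_potential_drop _ (fun t => ∑' x, if d ≤ lv x then μ t x else 0) _
    ((ENNReal.tsum_le_tsum fun x => by split_ifs <;> simp).trans h0)
    fun t => tsum_levelGe_step_add_mul_le k lv (hμ t) hk hmono fun x hx => hx ▸ himp x

theorem tsum_levelMass_pos_le_sum_inv (n : ℕ) (hlv : ∀ x, lv x ≤ n)
    (hμ : ∀ t y, μ (t + 1) y = ∑' x, μ t x * k x y)
    (h0 : ∑' x, μ 0 x ≤ 1) (hk : ∀ x, ∑' y, k x y ≤ 1) (hmono : ∀ x y, lv x < lv y → k x y = 0)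
    (himp : ∀ x, π (lv x) ≤ ∑' y, if lv y < lv x then k x y else 0) :
    ∑' t, ∑' x, (if lv x = 0 then 0 else μ t x) ≤ ∑ d ∈ Icc 1 n, (π d)⁻¹ := by
  have hlevels : ∀ t x, (if lv x = 0 then 0 else μ t x) =
      ∑ d ∈ Icc 1 n, if lv x = d then μ t x else 0 := fun t x => by
    rw [sum_ite_eq]
    have := hlv x
    split_ifs <;> simp_all [Nat.one_le_iff_ne_zero]
  simp_rw [hlevels]
  calc _ = ∑ d ∈ Icc 1 n, ∑' t, ∑' x, (if lv x = d then μ t x else 0) := by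
        simp_rw [← Summable.tsum_finsetSum fun _ _ => ENNReal.summable]
    _ ≤ _ := sum_le_sum fun d _ => tsum_levelMass_le_inv k lv μ π hμ h0 hk hmono himp d

end FitnessLevels

lemma sum_flipBit_mul_crossBit (a z : Bool) {r : ℝ} (hr0 : 0 ≤ r) (hr1 : r ≤ 1) :
    ∑ b : Bool, (if b = a then ENNReal.ofReal (1 - r) else ENNReal.ofReal r) *
      ((if z = b then ENNReal.ofReal r else 0) + (if z = a then ENNReal.ofReal (1 - r) else 0)) =
    if z = a then ENNReal.ofReal (1 - r * r) else ENNReal.ofReal (r * r) := by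
  have hq : 0 ≤ 1 - r := by linarith
  have hone : ENNReal.ofReal r + ENNReal.ofReal (1 - r) = 1 := by
    rw [← ENNReal.ofReal_add hr0 hq]; simp
  have hkeep : ENNReal.ofReal (1 - r) + ENNReal.ofReal r * ENNReal.ofReal (1 - r) =
      ENNReal.ofReal (1 - r * r) := by
    rw [← ENNReal.ofReal_mul hr0, ← ENNReal.ofReal_add hq (by positivity)]
    ring_nf
  cases a <;> cases z <;> simp [hone, ← hkeep, add_comm, ENNReal.ofReal_mul hr0]

section GA

variable {N : ℕ} {βl βp βc : ℝ} {ul up uc : ℕ} {f : (Fin N → Bool) → ℝ}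

lemma div_sqrt_mem_Icc_zero_one {u P : ℕ} (hu : (u : ℝ) ≤ √N) (hP : P ∈ Icc 1 u) :
    (P : ℝ) / √N ∈ Set.Icc 0 1 :=
  ⟨by positivity, div_le_one_of_le₀ ((Nat.cast_le.2 (mem_Icc.1 hP).2).trans hu) (by positivity)⟩

lemma tsum_gaStep_le_one (x : Fin N → Bool) (hup : (up : ℝ) ≤ √N) (huc : (uc : ℝ) ≤ √N) :
    ∑' y, gaStep N βl βp βc ul up uc f x y ≤ 1 := by
  simp only [gaStep, mul_assoc, ENNReal.tsum_mul_left]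
  refine (tsum_tsum_mul_le_tsum fun P hP => ?_).trans (tsum_powMass_le_one βp up)
  obtain ⟨hp0, hp1⟩ := div_sqrt_mem_Icc_zero_one hup (mem_Icc_of_powMass_ne_zero hP)
  refine (tsum_tsum_mul_le_tsum fun Q hQ => ?_).trans (tsum_powMass_le_one βc uc)
  obtain ⟨hc0, hc1⟩ := div_sqrt_mem_Icc_zero_one huc (mem_Icc_of_powMass_ne_zero hQ)
  refine (tsum_tsum_mul_le_tsum fun lam _ => ?_).trans (tsum_powMass_le_one βl ul)
  refine (tsum_tsum_mul_le_tsum fun ℓ _ => ?_).trans (tsum_binomMass_le_one N hp0 hp1)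
  refine (tsum_tsum_mul_le_tsum fun x' _ => ?_).trans
    (tsum_bestOfMass_le_one _ _ (tsum_mutMass_le_one x ℓ))
  refine (tsum_tsum_mul_le_tsum fun yw _ => ?_).trans
    (tsum_bestOfMass_le_one _ _ (tsum_crossMass_le_one x x' hc0 hc1))
  split_ifs <;> simp

lemma gaStep_eq_zero_of_lt {x y : Fin N → Bool} (hlt : f y < f x) :
    gaStep N βl βp βc ul up uc f x y = 0 := by
  have hreject : ∀ yw, (if f x ≤ f yw then (if y = yw then (1 : ℝ≥0∞) else 0)
      else (if y = x then 1 else 0)) = 0 := fun yw => by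
    split_ifs with h1 h2 h3 <;> first | rfl | (subst_vars; linarith)
  simp [gaStep, hreject]

lemma tsum_gaMarginal_zero : ∑' x, gaMarginal N βl βp βc ul up uc f 0 x = 1 := by
  simp [gaMarginal, ENNReal.mul_inv_cancel]

lemma tsum_binomMass_mul_mutMass (x z : Fin N → Bool) {r : ℝ} (hr0 : 0 ≤ r) (hr1 : r ≤ 1) :
    ∑' ℓ, binomMass N r ℓ * mutMass x ℓ z =
      ∏ i, if z i = x i then ENNReal.ofReal (1 - r) else ENNReal.ofReal r := by
  set D := #{i | ¬z i = x i}
  have hsame : #{i | z i = x i} = N - D := by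
    have := card_filter_add_card_filter_not (s := univ) fun i => z i = x i
    rw [card_univ, Fintype.card_fin] at this
    omega
  have hD : D ≤ N := (card_le_univ _).trans (by simp)
  have hch : (N.choose D : ℝ≥0∞) ≠ 0 := by exact_mod_cast (Nat.choose_pos hD).ne'
  rw [tsum_eq_single D fun ℓ hℓ => by simp [mutMass, D, Ne.symm hℓ], prod_ite, prod_const,
    prod_const, hsame]
  simp only [binomMass, mutMass, if_pos hD, D]
  rw [if_pos trivial, ENNReal.ofReal_mul (by positivity), ENNReal.ofReal_mul (by positivity),
    ENNReal.ofReal_natCast, ENNReal.ofReal_pow hr0, ENNReal.ofReal_pow (by linarith), mul_comm,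
    ← mul_assoc, ← mul_assoc, ENNReal.inv_mul_cancel hch (ENNReal.natCast_ne_top _), one_mul,
    mul_comm]

lemma tsum_mutation_crossover (x z : Fin N → Bool) {r : ℝ} (hr0 : 0 ≤ r) (hr1 : r ≤ 1) :
    ∑' ℓ, binomMass N r ℓ * ∑' x', mutMass x ℓ x' * crossMass x x' r z =
      ∏ i, if z i = x i then ENNReal.ofReal (1 - r * r) else ENNReal.ofReal (r * r) := by
  calc _ = ∑' x', (∑' ℓ, binomMass N r ℓ * mutMass x ℓ x') * crossMass x x' r z := by
        simp_rw [← ENNReal.tsum_mul_left, ← ENNReal.tsum_mul_right, mul_assoc]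
        exact ENNReal.tsum_comm
    _ = ∑ x' : Fin N → Bool, ∏ i,
          (if x' i = x i then ENNReal.ofReal (1 - r) else ENNReal.ofReal r) *
          ((if z i = x' i then ENNReal.ofReal r else 0) +
            (if z i = x i then ENNReal.ofReal (1 - r) else 0)) := by
        simp_rw [tsum_binomMass_mul_mutMass x _ hr0 hr1, crossMass, ← prod_mul_distrib,
          tsum_fintype]
    _ = _ := by
        rw [← Fintype.prod_sum fun i b => (if b = x i then ENNReal.ofReal (1 - r)
          else ENNReal.ofReal r) * ((if z i = b then ENNReal.ofReal r else 0) +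
            (if z i = x i then ENNReal.ofReal (1 - r) else 0))]
        exact prod_congr rfl fun i _ => sum_flipBit_mul_crossBit _ _ hr0 hr1

lemma prod_ite_update_eq {M : Type*} [CommMonoid M] (x : Fin N → Bool) {j : Fin N} {b : Bool}
    (hb : b ≠ x j) (A B : M) :
    ∏ i, (if Function.update x j b i = x i then A else B) = B * A ^ (N - 1) := by
  rw [Fintype.prod_eq_mul_prod_compl j, Function.update_self, if_neg hb,
    prod_congr rfl fun i hi => by rw [Function.update_of_ne (by simpa using hi), if_pos rfl]]
  simp [card_compl]

lemma gaStep_ge_of_le {x z : Fin N → Bool} (hxz : f x ≤ f z) :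
    powMass βp up 1 * powMass βc uc 1 * powMass βl ul 1 *
        ∑' ℓ, binomMass N (1 / √N) ℓ * ∑' x', mutMass x ℓ x' * crossMass x x' (1 / √N) z ≤
      gaStep N βl βp βc ul up uc f x z := by
  unfold gaStep
  refine ((le_trans ?_ (ENNReal.le_tsum 1)).trans (ENNReal.le_tsum 1)).trans (ENNReal.le_tsum 1)
  simp only [bestOfMass_one, Nat.cast_one, ← ENNReal.tsum_mul_left, ← mul_assoc]
  gcongr with ℓ x'
  exact le_trans (by simp [hxz]) (ENNReal.le_tsum z)

def numZeros (x : Fin N → Bool) : ℕ := #{i | x i = false}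

lemma numZeros_le (x : Fin N → Bool) : numZeros x ≤ N :=
  (card_le_univ _).trans (by simp)

lemma oneMax_add_numZeros (x : Fin N → Bool) : oneMax N x + numZeros x = N := by
  have := card_filter_add_card_filter_not (s := univ) fun i => x i = true
  simp only [Bool.not_eq_true, card_univ, Fintype.card_fin] at this
  simpa [oneMax, numZeros] using congrArg (Nat.cast : ℕ → ℝ) this

lemma oneMax_lt_oneMax_iff {x y : Fin N → Bool} :
    oneMax N x < oneMax N y ↔ numZeros y < numZeros x := by
  have hx := oneMax_add_numZeros x
  have hy := oneMax_add_numZeros y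
  rw [← Nat.cast_lt (α := ℝ)]
  constructor <;> intro <;> linarith

lemma numZeros_eq_zero_iff {x : Fin N → Bool} : numZeros x = 0 ↔ x = fun _ => true := by
  simp [numZeros, filter_eq_empty_iff, funext_iff]

lemma oneMax_update_true {x : Fin N → Bool} {j : Fin N} (hj : x j = false) :
    oneMax N (Function.update x j true) = oneMax N x + 1 := by
  have hones : univ.filter (fun i => Function.update x j true i = true) =
      insert j (univ.filter fun i => x i = true) := by
    ext i
    rcases eq_or_ne i j with rfl | hij <;> simp [Function.update_of_ne, *]
  rw [oneMax, oneMax, hones, card_insert_of_notMem (by simp [hj])]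
  push_cast
  ring

lemma gaStep_oneMax_update_ge {x : Fin N → Bool} {j : Fin N} (hj : x j = false) :
    powMass βp up 1 * powMass βc uc 1 * powMass βl ul 1 *
        ENNReal.ofReal ((N : ℝ)⁻¹ * (1 - (N : ℝ)⁻¹) ^ (N - 1)) ≤
      gaStep N βl βp βc ul up uc (oneMax N) x (Function.update x j true) := by
  have hN : (1 : ℝ) ≤ N := Nat.one_le_cast.2 j.pos
  have hr1 : 1 / √N ≤ 1 := div_le_one_of_le₀ (Real.one_le_sqrt.2 hN) (by positivity)
  have hrr : 1 / √N * (1 / √N) = (N : ℝ)⁻¹ := by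
    rw [div_mul_div_comm, one_mul, Real.mul_self_sqrt (Nat.cast_nonneg _), one_div]
  refine le_of_eq_of_le ?_ (gaStep_ge_of_le (by rw [oneMax_update_true hj]; linarith))
  rw [tsum_mutation_crossover x _ (by positivity) hr1, prod_ite_update_eq x (by simp [hj]), hrr,
    ← ENNReal.ofReal_pow (sub_nonneg.2 (inv_le_one_of_one_le₀ hN)),
    ← ENNReal.ofReal_mul (by positivity)]

lemma numZeros_mul_le_tsum_improve (x : Fin N → Bool) :
    numZeros x * (powMass βp up 1 * powMass βc uc 1 * powMass βl ul 1 *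
        ENNReal.ofReal ((N : ℝ)⁻¹ * (1 - (N : ℝ)⁻¹) ^ (N - 1))) ≤
      ∑' y, if numZeros y < numZeros x then gaStep N βl βp βc ul up uc (oneMax N) x y else 0 := by
  have hflip : ∀ j ∈ (univ.filter fun i => x i = false),
      powMass βp up 1 * powMass βc uc 1 * powMass βl ul 1 *
        ENNReal.ofReal ((N : ℝ)⁻¹ * (1 - (N : ℝ)⁻¹) ^ (N - 1)) ≤
      if numZeros (Function.update x j true) < numZeros x
        then gaStep N βl βp βc ul up uc (oneMax N) x (Function.update x j true) else 0 := by
    intro j hj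
    have hj : x j = false := by simpa using hj
    rw [if_pos (oneMax_lt_oneMax_iff.1 (by rw [oneMax_update_true hj]; linarith))]
    exact gaStep_oneMax_update_ge hj
  have hinj : Set.InjOn (fun j => Function.update x j true) (univ.filter fun i => x i = false) := by
    intro j hj j' _ hjj'
    by_contra hne
    have := congrFun hjj' j
    simp_all
  calc _ = ∑ j ∈ (univ.filter fun i => x i = false), powMass βp up 1 * powMass βc uc 1 *
        powMass βl ul 1 * ENNReal.ofReal ((N : ℝ)⁻¹ * (1 - (N : ℝ)⁻¹) ^ (N - 1)) := by
        simp [numZeros]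
    _ ≤ _ := sum_le_sum hflip
    _ = _ := (sum_image (f := fun y => if numZeros y < numZeros x
        then gaStep N βl βp βc ul up uc (oneMax N) x y else 0) hinj).symm
    _ ≤ _ := ENNReal.sum_le_tsum _

end GA

-- The `n = 0` term is `0 ^ (-β) = 0`, so this is `1 / ζ(β)`.
noncomputable def zetaInv (β : ℝ) : ℝ := (∑' n : ℕ, (n : ℝ) ^ (-β))⁻¹

lemma summable_rpow_neg {β : ℝ} (hβ : 1 < β) : Summable fun n : ℕ => (n : ℝ) ^ (-β) :=
  Real.summable_nat_rpow.2 (by linarith)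

lemma zetaInv_pos {β : ℝ} (hβ : 1 < β) : 0 < zetaInv β := by
  refine inv_pos.2 (lt_of_lt_of_le one_pos ?_)
  simpa using (summable_rpow_neg hβ).le_tsum 1 fun n _ => by positivity

lemma ofReal_zetaInv_le_powMass_one {β : ℝ} (hβ : 1 < β) {u : ℕ} (hu : 1 ≤ u) :
    ENNReal.ofReal (zetaInv β) ≤ powMass β u 1 := by
  have h1 : (1 : ℕ) ∈ Icc 1 u := mem_Icc.2 ⟨le_rfl, hu⟩
  have hS : 0 < ∑ j ∈ Icc 1 u, (j : ℝ) ^ (-β) :=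
    sum_pos (fun j hj => by have := (mem_Icc.1 hj).1; positivity) ⟨1, h1⟩
  rw [powMass, if_pos h1, Nat.cast_one, Real.one_rpow, mul_one]
  exact ENNReal.ofReal_le_ofReal (inv_anti₀ hS
    ((summable_rpow_neg hβ).sum_le_tsum _ fun n _ => by positivity))

lemma exp_neg_one_le_one_sub_inv_pow (N : ℕ) : Real.exp (-1) ≤ (1 - (N : ℝ)⁻¹) ^ (N - 1) := by
  obtain _ | _ | m := N
  · simp
  · simp
  have hbase : 1 - ((m + 2 : ℕ) : ℝ)⁻¹ = (1 + ((m + 1 : ℕ) : ℝ)⁻¹)⁻¹ := by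
    push_cast
    field_simp
    ring
  rw [hbase, Nat.add_sub_cancel, inv_pow, Real.exp_neg]
  exact inv_anti₀ (by positivity) Real.one_add_inv_pow_le_exp

noncomputable def levelRateConst (βl βp βc : ℝ) : ℝ :=
  Real.exp (-1) * (zetaInv βp * zetaInv βc * zetaInv βl)

lemma levelRateConst_pos {βl βp βc : ℝ} (hβl : 1 < βl) (hβp : 1 < βp) (hβc : 1 < βc) :
    0 < levelRateConst βl βp βc :=
  mul_pos (Real.exp_pos _) (mul_pos (mul_pos (zetaInv_pos hβp) (zetaInv_pos hβc)) (zetaInv_pos hβl))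

lemma ofReal_mul_numZeros_le_tsum_improve {βl βp βc : ℝ} (hβl : 1 < βl) (hβp : 1 < βp)
    (hβc : 1 < βc) {ul up uc : ℕ} (hul : 1 ≤ ul) (hup : 1 ≤ up) (huc : 1 ≤ uc) {N : ℕ}
    (x : Fin N → Bool) :
    ENNReal.ofReal (levelRateConst βl βp βc * numZeros x / N) ≤
      ∑' y, if numZeros y < numZeros x then gaStep N βl βp βc ul up uc (oneMax N) x y else 0 := by
  have hp := zetaInv_pos hβp
  have hc := zetaInv_pos hβc
  have hl := zetaInv_pos hβl
  refine le_trans ?_ (numZeros_mul_le_tsum_improve x)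
  calc _ ≤ ENNReal.ofReal (numZeros x * (zetaInv βp * zetaInv βc * zetaInv βl *
        ((N : ℝ)⁻¹ * (1 - (N : ℝ)⁻¹) ^ (N - 1)))) := by
        refine ENNReal.ofReal_le_ofReal ?_
        have := exp_neg_one_le_one_sub_inv_pow N
        rw [levelRateConst, div_eq_mul_inv]
        calc _ = numZeros x * (zetaInv βp * zetaInv βc * zetaInv βl *
              ((N : ℝ)⁻¹ * Real.exp (-1))) := by ring
          _ ≤ _ := by gcongr
    _ = numZeros x * (ENNReal.ofReal (zetaInv βp) * ENNReal.ofReal (zetaInv βc) *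
          ENNReal.ofReal (zetaInv βl) *
          ENNReal.ofReal ((N : ℝ)⁻¹ * (1 - (N : ℝ)⁻¹) ^ (N - 1))) := by
        rw [ENNReal.ofReal_mul (by positivity), ENNReal.ofReal_natCast,
          ENNReal.ofReal_mul (by positivity), ENNReal.ofReal_mul (by positivity),
          ENNReal.ofReal_mul (by positivity)]
    _ ≤ _ := by
        gcongr
        exacts [ofReal_zetaInv_le_powMass_one hβp hup, ofReal_zetaInv_le_powMass_one hβc huc,
          ofReal_zetaInv_le_powMass_one hβl hul]

lemma sum_Icc_inv_le_mul_log {N : ℕ} (hN : 2 ≤ N) :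
    ∑ d ∈ Icc 1 N, (d : ℝ)⁻¹ ≤ (1 + (Real.log 2)⁻¹) * Real.log N := by
  have hlog2 : 0 < Real.log 2 := Real.log_pos (by norm_num)
  have hlogN : Real.log 2 ≤ Real.log N := Real.log_le_log (by norm_num) (by exact_mod_cast hN)
  have hH : ∑ d ∈ Icc 1 N, (d : ℝ)⁻¹ ≤ 1 + Real.log N := by
    simpa [harmonic_eq_sum_Icc] using harmonic_le_one_add_log N
  have h1 : 1 ≤ (Real.log 2)⁻¹ * Real.log N := by rwa [inv_mul_eq_div, one_le_div hlog2]
  nlinarith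

lemma sum_inv_ofReal_le_mul_log {K : ℝ} (hK : 0 < K) {N : ℕ} (hN : 2 ≤ N) :
    ∑ d ∈ Icc 1 N, (ENNReal.ofReal (K * d / N))⁻¹ ≤
      ENNReal.ofReal ((1 + (Real.log 2)⁻¹) / K * N * Real.log N) := by
  have hterm : ∀ d ∈ Icc 1 N, (ENNReal.ofReal (K * d / N))⁻¹ = ENNReal.ofReal (N / K * (d : ℝ)⁻¹) :=
    fun d hd => by
      have : (0 : ℝ) < d := by exact_mod_cast (mem_Icc.1 hd).1
      rw [← ENNReal.ofReal_inv_of_pos (by positivity)]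
      congr 1
      field_simp
  rw [sum_congr rfl hterm, ← ENNReal.ofReal_sum_of_nonneg fun d _ => by positivity, ← mul_sum]
  refine ENNReal.ofReal_le_ofReal ?_
  calc _ ≤ N / K * ((1 + (Real.log 2)⁻¹) * Real.log N) := by gcongr; exact sum_Icc_inv_le_mul_log hN
    _ = _ := by ring

/-- If `βλ > 1`, `βp > 1` and `βc > 1`, then there is a constant
`C > 0` (depending only on `βλ, βp, βc`) such that for all `N ≥ 2`, `uλ ≥ 1` and
`1 ≤ up, uc ≤ √N`, the heavy-tailed `(1+(λ,λ))` GA maximizing OneMax on `{0,1}^N`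
satisfies `E[T_I] ≤ C·N·ln N`, where `T_I` is the first iteration index `t ≥ 0`
at which the current solution `x_t` is the all-ones string. -/
theorem heavyTailedGA_oneMax_runtime (βl βp βc : ℝ)
    (hβl : 1 < βl) (hβp : 1 < βp) (hβc : 1 < βc) :
    ∃ C : ℝ, 0 < C ∧ ∀ N : ℕ, 2 ≤ N → ∀ ul up uc : ℕ,
      1 ≤ ul → 1 ≤ up → (up : ℝ) ≤ Real.sqrt N → 1 ≤ uc → (uc : ℝ) ≤ Real.sqrt N →
      gaExpectedIterations N βl βp βc ul up uc (oneMax N)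
          (fun x => x = fun _ => true)
        ≤ ENNReal.ofReal (C * N * Real.log N) := by
  set K := levelRateConst βl βp βc
  have hK : 0 < K := levelRateConst_pos hβl hβp hβc
  refine ⟨(1 + (Real.log 2)⁻¹) / K, by positivity, fun N hN ul up uc hul hup hup' huc huc' => ?_⟩
  simp only [gaExpectedIterations, ← numZeros_eq_zero_iff]
  calc _ ≤ ∑ d ∈ Icc 1 N, (ENNReal.ofReal (K * d / N))⁻¹ :=
        tsum_levelMass_pos_le_sum_inv (gaStep N βl βp βc ul up uc (oneMax N)) numZeros
          (gaMarginal N βl βp βc ul up uc (oneMax N)) (fun d => ENNReal.ofReal (K * d / N)) N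
          numZeros_le (fun _ _ => rfl) tsum_gaMarginal_zero.le
          (fun x => tsum_gaStep_le_one x hup' huc')
          (fun _ _ h => gaStep_eq_zero_of_lt (oneMax_lt_oneMax_iff.2 h))
          (ofReal_mul_numZeros_le_tsum_improve hβl hβp hβc hul hup huc)
    _ ≤ _ := sum_inv_ofReal_le_mul_log hK hN
end
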